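/- For every V ≥ 5, W(V) = p_V · ∏_{i=3}^{V-1} (p_{i+1}-3)/p_i > 6, where p_i is the i-th prime. -/

import Mathlib

/-- `p i` is the i-th prime with 1-based indexing: p 1 = 2, p 2 = 3, p 3 = 5, ... -/
noncomputable def nthPrime (i : ℕ) : ℕ := Nat.nth Nat.Prime (i - 1)

/-- W(V) = p_V · ∏_{i=3}^{V-1} (p_{i+1} - 3)/p_i as a rational number. -/
noncomputable def W (V : ℕ) : ℚ :=
  (nthPrime V : ℚ) * ∏ i ∈ Finset.Icc 3 (V - 1),
    ((nthPrime (i + 1) : ℚ) - 3) / (nthPrime i : ℚ)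

lemma nth_prime_two' : Nat.nth Nat.Prime 2 = 5 := by
  have : Nat.count Nat.Prime 5 = 2 := by decide
  simpa [this] using Nat.nth_count (p := Nat.Prime) (n := 5) (by norm_num)

lemma nth_prime_three' : Nat.nth Nat.Prime 3 = 7 := by
  have : Nat.count Nat.Prime 7 = 3 := by decide
  simpa [this] using Nat.nth_count (p := Nat.Prime) (n := 7) (by norm_num)

lemma nth_prime_four' : Nat.nth Nat.Prime 4 = 11 := by
  have : Nat.count Nat.Prime 11 = 4 := by decide
  simpa [this] using Nat.nth_count (p := Nat.Prime) (n := 11) (by norm_num)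

lemma W_five : W 5 = 352/35 := by
  have h : Finset.Icc 3 4 = ({3, 4} : Finset ℕ) := by decide
  rw [W, show (5:ℕ)-1 = 4 from rfl, h, Finset.prod_pair (by norm_num)]
  simp [nthPrime, nth_prime_two', nth_prime_three', nth_prime_four']
  norm_num

/-- key fact about consecutive primes ≥ 5 -/
lemma prime_step (k : ℕ) (hk : 2 ≤ k) :
    let p := Nat.nth Nat.Prime k
    let q := Nat.nth Nat.Prime (k + 1)
    5 ≤ p ∧ p + 2 ≤ q := by
  intro p q
  have hmono := Nat.nth_strictMono (p := Nat.Prime) Nat.infinite_setOf_prime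
  have hp5 : 5 ≤ p := by
    calc 5 = Nat.nth Nat.Prime 2 := nth_prime_two'.symm
    _ ≤ p := hmono.monotone hk
  have hq5 : 5 ≤ q := le_trans hp5 (hmono (Nat.lt_succ_self k)).le
  have hpprime : p.Prime := Nat.prime_nth_prime k
  have hqprime : q.Prime := Nat.prime_nth_prime (k + 1)
  have hpodd : Odd p := hpprime.odd_of_ne_two (by omega)
  have hqodd : Odd q := hqprime.odd_of_ne_two (by omega)
  have hlt : p < q := hmono (Nat.lt_succ_self k)
  refine ⟨hp5, ?_⟩
  rcases hpodd with ⟨a, ha⟩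
  rcases hqodd with ⟨b, hb⟩
  omega

theorem W_gt_six (V : ℕ) (hV : 5 ≤ V) : W V > 6 := by
  induction V, hV using Nat.le_induction with
  | base => rw [W_five]; norm_num
  | succ n hn ih =>
    obtain ⟨m, rfl⟩ : ∃ m, n = m + 1 := ⟨n - 1, by omega⟩
    set p : ℚ := (nthPrime (m + 1) : ℚ) with hpdef
    set q : ℚ := (nthPrime (m + 2) : ℚ) with hqdef
    obtain ⟨hp5, hpq⟩ := prime_step m (by omega)
    have hp5n : 5 ≤ nthPrime (m + 1) := hp5
    have hpqn : nthPrime (m + 1) + 2 ≤ nthPrime (m + 2) := hpq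
    have hp5' : (5:ℚ) ≤ p := by rw [hpdef]; exact_mod_cast hp5n
    have hpq' : p + 2 ≤ q := by rw [hpdef, hqdef]; exact_mod_cast hpqn
    have hppos : (0:ℚ) < p := by linarith
    have hkey : W (m + 2) = W (m + 1) * (q * (q - 3) / (p * p)) := by
      rw [W, W, show m + 2 - 1 = m + 1 from rfl, show m + 1 - 1 = m from rfl,
        Finset.prod_Icc_succ_top (by omega)]
      rw [← hpdef, ← hqdef]
      set P := ∏ i ∈ Finset.Icc 3 m, ((nthPrime (i+1) : ℚ) - 3) / (nthPrime i : ℚ) with hP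
      field_simp
    have hr : 1 < q * (q - 3) / (p * p) := by
      rw [lt_div_iff₀ (by positivity)]
      nlinarith [hp5', hpq']
    have h1 : W (m + 1) * 1 < W (m + 1) * (q * (q - 3) / (p * p)) :=
      mul_lt_mul_of_pos_left hr (by linarith)
    rw [hkey]
    linarith
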